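/- Let X be a real random variable and (cₙ) a sequence of positive reals with cₙ/√n nondecreasing and tending to infinity. If ∑ₙ P(|X| ≥ cₙ) < ∞, then ∑ₙ E[|X|³ 1{|X| ≤ cₙ}]/cₙ³ < ∞. -/

import Mathlib

open MeasureTheory ProbabilityTheory Filter Set
open scoped ProbabilityTheory

/-! For `x ≥ 0` let `m` be the first index with `x ≤ cₘ`. The terms with `n < m` vanish, and for
`n ≥ m` the monotonicity of `cₙ/√n` gives `x³/cₙ³ ≤ (m/n)^{3/2}`, whose sum over `n ≥ m` is at
most `3m`; meanwhile the `m - 1` indices below `m` satisfy `cₙ ≤ x`. Hence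
`∑ₙ x³ 1{x ≤ cₙ}/cₙ³ ≤ 3 (1 + #{n : cₙ ≤ x})`, and taking expectations at `x = |X|` bounds the
partial sums by `3 (1 + ∑ₙ P(|X| ≥ cₙ))`. -/

lemma one_div_sqrt_add_one_pow_three_le {x : ℝ} (hx : 0 < x) :
    1 / √(x + 1) ^ 3 ≤ 2 / √x - 2 / √(x + 1) := by
  have ha : 0 < √x := Real.sqrt_pos.2 hx
  have hb : 0 < √(x + 1) := Real.sqrt_pos.2 (by linarith)
  have hab : √x ≤ √(x + 1) := Real.sqrt_le_sqrt (by linarith)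
  have hsq : √(x + 1) ^ 2 - √x ^ 2 = 1 := by
    rw [Real.sq_sqrt hx.le, Real.sq_sqrt (by linarith)]; ring
  rw [div_sub_div _ _ ha.ne' hb.ne', div_le_div_iff₀ (by positivity) (by positivity)]
  nlinarith [mul_pos ha hb, mul_nonneg (mul_nonneg ha.le hb.le) (sub_nonneg.2 hab),
    mul_nonneg (mul_nonneg hb.le hb.le) (sub_nonneg.2 hab)]

lemma sum_Ico_one_div_sqrt_pow_three_le {m : ℕ} (hm : 1 ≤ m) (N : ℕ) :
    ∑ n ∈ Finset.Ico m N, 1 / √(n : ℝ) ^ 3 ≤ 3 / √(m : ℝ) := by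
  have hm' : (1 : ℝ) ≤ m := by exact_mod_cast hm
  have hsqrt : 1 ≤ √(m : ℝ) := Real.one_le_sqrt.2 hm'
  have telescope : ∀ K, m ≤ K →
      ∑ n ∈ Finset.Ico m (K + 1), 1 / √(n : ℝ) ^ 3 ≤ 1 / √(m : ℝ) ^ 3 + 2 / √(m : ℝ) - 2 / √(K : ℝ) := by
    intro K hK
    induction K, hK using Nat.le_induction with
    | base => simp
    | succ K hK ih =>
      rw [Finset.sum_Ico_succ_top (by omega)]
      have := one_div_sqrt_add_one_pow_three_le (x := K) (by exact_mod_cast hm.trans hK)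
      push_cast
      linarith
  rcases le_or_gt N m with hN | hN
  · rw [Finset.Ico_eq_empty_of_le hN, Finset.sum_empty]; positivity
  obtain ⟨K, rfl⟩ : ∃ K, N = K + 1 := ⟨N - 1, by omega⟩
  have h1 : 1 / √(m : ℝ) ^ 3 ≤ 1 / √(m : ℝ) :=
    one_div_le_one_div_of_le (by positivity) (le_self_pow₀ hsqrt (by norm_num))
  have h2 : 0 ≤ 2 / √(K : ℝ) := by positivity
  have := telescope K (by omega)
  linarith [show 1 / √(m : ℝ) + 2 / √(m : ℝ) = 3 / √(m : ℝ) by ring]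

section SqrtGrowth

variable {c : ℕ → ℝ} (hcpos : ∀ n, 1 ≤ n → 0 < c n)
  (hmono : ∀ m n, 1 ≤ m → m ≤ n → c m / Real.sqrt m ≤ c n / Real.sqrt n)
include hcpos hmono

lemma pow_three_div_le_of_le {x : ℝ} (hx : 0 ≤ x) {m n : ℕ} (hm : 1 ≤ m) (hmn : m ≤ n)
    (hxm : x ≤ c m) : x ^ 3 / c n ^ 3 ≤ (√(m : ℝ) / √(n : ℝ)) ^ 3 := by
  have hcn := hcpos n (hm.trans hmn)
  have hsm : 0 < √(m : ℝ) := Real.sqrt_pos.2 (by exact_mod_cast hm)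
  have hsn : 0 < √(n : ℝ) := Real.sqrt_pos.2 (by exact_mod_cast hm.trans hmn)
  have hratio : c m / c n ≤ √(m : ℝ) / √(n : ℝ) := by
    have := hmono m n hm hmn
    rw [div_le_div_iff₀ hsm hsn] at this
    rw [div_le_div_iff₀ hcn hsn]
    linarith
  rw [← div_pow]
  exact pow_le_pow_left₀ (by positivity) ((div_le_div_of_nonneg_right hxm hcn.le).trans hratio) 3

lemma sum_Ico_trunc_pow_three_div_le_of_le {x : ℝ} (hx : 0 ≤ x) {m : ℕ} (hm : 1 ≤ m)
    (hxm : x ≤ c m) (N : ℕ) :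
    ∑ n ∈ Finset.Ico m N, (if x ≤ c n then x ^ 3 else 0) / c n ^ 3 ≤ 3 * m := by
  have hsm : 0 < √(m : ℝ) := Real.sqrt_pos.2 (by exact_mod_cast hm)
  calc ∑ n ∈ Finset.Ico m N, (if x ≤ c n then x ^ 3 else 0) / c n ^ 3
      ≤ ∑ n ∈ Finset.Ico m N, √(m : ℝ) ^ 3 * (1 / √(n : ℝ) ^ 3) := by
        refine Finset.sum_le_sum fun n hn => ?_
        have hmn := (Finset.mem_Ico.1 hn).1
        have hcn := hcpos n (hm.trans hmn)
        calc (if x ≤ c n then x ^ 3 else 0) / c n ^ 3 ≤ x ^ 3 / c n ^ 3 := by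
              gcongr
              split_ifs
              · rfl
              · positivity
          _ ≤ (√(m : ℝ) / √(n : ℝ)) ^ 3 := pow_three_div_le_of_le hcpos hmono hx hm hmn hxm
          _ = _ := by ring
    _ = √(m : ℝ) ^ 3 * ∑ n ∈ Finset.Ico m N, 1 / √(n : ℝ) ^ 3 := (Finset.mul_sum ..).symm
    _ ≤ √(m : ℝ) ^ 3 * (3 / √(m : ℝ)) := by
        gcongr; exact sum_Ico_one_div_sqrt_pow_three_le hm N
    _ = 3 * m := by
        rw [pow_succ, pow_two, Real.mul_self_sqrt (Nat.cast_nonneg m)]; field_simp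

lemma sum_Ico_trunc_pow_three_div_le {x : ℝ} (hx : 0 ≤ x) (N : ℕ) :
    ∑ n ∈ Finset.Ico 1 N, (if x ≤ c n then x ^ 3 else 0) / c n ^ 3
      ≤ 3 * (1 + ∑ n ∈ Finset.Ico 1 N, if c n ≤ x then (1 : ℝ) else 0) := by
  have hcount_nonneg : 0 ≤ ∑ n ∈ Finset.Ico 1 N, if c n ≤ x then (1 : ℝ) else 0 :=
    Finset.sum_nonneg fun n _ => by split_ifs <;> norm_num
  by_cases hex : ∃ m, 1 ≤ m ∧ m < N ∧ x ≤ c m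
  swap
  · push Not at hex
    rw [Finset.sum_eq_zero fun n hn => ?_]
    · linarith
    obtain ⟨hn1, hnN⟩ := Finset.mem_Ico.1 hn
    rw [if_neg (hex n hn1 hnN).not_ge, zero_div]
  set m := Nat.find hex
  obtain ⟨hm1, hmN, hxm⟩ : 1 ≤ m ∧ m < N ∧ x ≤ c m := Nat.find_spec hex
  have hbelow : ∀ n ∈ Finset.Ico 1 m, c n < x := fun n hn => by
    obtain ⟨hn1, hnm⟩ := Finset.mem_Ico.1 hn
    have := Nat.find_min hex hnm
    push Not at this
    exact this hn1 (hnm.trans hmN)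
  have hhead : ∑ n ∈ Finset.Ico 1 m, (if x ≤ c n then x ^ 3 else 0) / c n ^ 3 = 0 :=
    Finset.sum_eq_zero fun n hn => by rw [if_neg (hbelow n hn).not_ge, zero_div]
  have hcount : (m : ℝ) - 1 ≤ ∑ n ∈ Finset.Ico 1 N, if c n ≤ x then (1 : ℝ) else 0 :=
    calc (m : ℝ) - 1 = ∑ n ∈ Finset.Ico 1 m, if c n ≤ x then (1 : ℝ) else 0 := by
          rw [Finset.sum_congr rfl fun n hn => if_pos (hbelow n hn).le]
          simp [Nat.cast_sub hm1]
      _ ≤ _ := Finset.sum_le_sum_of_subset_of_nonneg (Finset.Ico_subset_Ico_right hmN.le)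
          fun n _ _ => by split_ifs <;> norm_num
  have htail := sum_Ico_trunc_pow_three_div_le_of_le hcpos hmono hx hm1 hxm N
  rw [← Finset.sum_Ico_consecutive _ hm1 hmN.le, hhead]
  linarith

end SqrtGrowth

lemma integrable_ite_abs_le_pow {Ω : Type*} [MeasurableSpace Ω] (μ : Measure Ω)
    [IsFiniteMeasure μ] {X : Ω → ℝ} (hX : Measurable X) (a : ℝ) (k : ℕ) :
    Integrable (fun ω => if |X ω| ≤ a then |X ω| ^ k else 0) μ := by
  refine Integrable.of_bound
    (Measurable.ite (measurableSet_le hX.abs measurable_const) (hX.abs.pow_const k)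
      measurable_const).aestronglyMeasurable (|a| ^ k) (ae_of_all _ fun ω => ?_)
  split_ifs with h
  · rw [Real.norm_eq_abs, abs_pow, abs_abs]
    exact pow_le_pow_left₀ (abs_nonneg _) (h.trans (le_abs_self a)) k
  · simp only [norm_zero]; positivity

lemma sum_Ico_integral_trunc_pow_three_div_le {Ω : Type*} [MeasurableSpace Ω] (μ : Measure Ω)
    [IsProbabilityMeasure μ] {X : Ω → ℝ} (hX : Measurable X) {c : ℕ → ℝ}
    (hcpos : ∀ n, 1 ≤ n → 0 < c n)
    (hmono : ∀ m n, 1 ≤ m → m ≤ n → c m / Real.sqrt m ≤ c n / Real.sqrt n) (N : ℕ) :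
    ∑ n ∈ Finset.Ico 1 N, (∫ ω, (if |X ω| ≤ c n then |X ω| ^ 3 else 0) ∂μ) / c n ^ 3
      ≤ 3 * (1 + ∑ n ∈ Finset.Ico 1 N, (μ {ω | c n ≤ |X ω|}).toReal) := by
  have hset : ∀ n, MeasurableSet {ω | c n ≤ |X ω|} := fun n =>
    measurableSet_le measurable_const hX.abs
  have hind : ∀ n, (fun ω => if c n ≤ |X ω| then (1 : ℝ) else 0)
      = {ω | c n ≤ |X ω|}.indicator 1 := fun n => by
    ext ω; simp [Set.indicator_apply]
  have hind_int : ∀ n, Integrable (fun ω => if c n ≤ |X ω| then (1 : ℝ) else 0) μ := fun n => by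
    rw [hind n]; exact (integrable_const 1).indicator (hset n)
  have htrunc_int : ∀ n, Integrable
      (fun ω => (if |X ω| ≤ c n then |X ω| ^ 3 else 0) / c n ^ 3) μ := fun n =>
    (integrable_ite_abs_le_pow μ hX (c n) 3).div_const _
  calc ∑ n ∈ Finset.Ico 1 N, (∫ ω, (if |X ω| ≤ c n then |X ω| ^ 3 else 0) ∂μ) / c n ^ 3
      = ∫ ω, ∑ n ∈ Finset.Ico 1 N, (if |X ω| ≤ c n then |X ω| ^ 3 else 0) / c n ^ 3 ∂μ := by
        rw [integral_finsetSum _ fun n _ => htrunc_int n]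
        simp only [integral_div]
    _ ≤ ∫ ω, 3 * (1 + ∑ n ∈ Finset.Ico 1 N, if c n ≤ |X ω| then (1 : ℝ) else 0) ∂μ :=
        integral_mono (integrable_finsetSum _ fun n _ => htrunc_int n)
          (((integrable_const 1).add (integrable_finsetSum _ fun n _ => hind_int n)).const_mul 3)
          fun ω => sum_Ico_trunc_pow_three_div_le hcpos hmono (abs_nonneg (X ω)) N
    _ = 3 * (1 + ∑ n ∈ Finset.Ico 1 N, (μ {ω | c n ≤ |X ω|}).toReal) := by
        rw [integral_const_mul, integral_add (integrable_const 1)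
          (integrable_finsetSum _ fun n _ => hind_int n), integral_finsetSum _ fun n _ => hind_int n]
        simp only [hind, integral_indicator_one (hset _), integral_const, smul_eq_mul, mul_one,
          measureReal_def, measure_univ, ENNReal.toReal_one]

lemma summable_of_sum_Ico_one_le {f : ℕ → ℝ} {C : ℝ} (hf : ∀ n, 1 ≤ n → 0 ≤ f n)
    (h : ∀ N, ∑ n ∈ Finset.Ico 1 N, f n ≤ C) : Summable f := by
  rw [← summable_nat_add_iff 1]
  refine summable_of_sum_range_le (c := C) (fun n => hf _ (Nat.le_add_left 1 n)) fun N => ?_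
  rw [Finset.range_eq_Ico, Finset.sum_Ico_add' f, zero_add]
  exact h (N + 1)

theorem stmt_3 {Ω : Type*} [MeasureSpace Ω] [IsProbabilityMeasure (ℙ : Measure Ω)]
    (X : Ω → ℝ) (hX : Measurable X)
    (c : ℕ → ℝ) (hcpos : ∀ n, 1 ≤ n → 0 < c n)
    (hmono : ∀ m n, 1 ≤ m → m ≤ n → c m / Real.sqrt m ≤ c n / Real.sqrt n)
    (hsum : Summable (fun n => (ℙ {ω | c n ≤ |X ω|}).toReal)) :
    Summable (fun n => (∫ ω, (if |X ω| ≤ c n then |X ω| ^ 3 else 0)) / (c n) ^ 3) := by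
  refine summable_of_sum_Ico_one_le (C := 3 * (1 + ∑' n, (ℙ {ω | c n ≤ |X ω|}).toReal))
    (fun n hn => div_nonneg (integral_nonneg fun ω => by dsimp only; split_ifs <;> positivity)
      (pow_nonneg (hcpos n hn).le 3)) fun N => ?_
  grw [sum_Ico_integral_trunc_pow_three_div_le ℙ hX hcpos hmono,
    hsum.sum_le_tsum _ fun n _ => ENNReal.toReal_nonneg]
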